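/- arXiv:2301.03435 — 2 statements merged into one kernel-verified Lean document; each statement's English description precedes it below -/
import Mathlib

section
/- The map T(W) = L₁ ∪ (L₂ · W) on languages is co-continuous: for every decreasing sequence of languages W₀ ⊇ W₁ ⊇ W₂ ⊇ …, T(⋂ᵢ Wᵢ) = ⋂ᵢ T(Wᵢ). -/
/-!
A word `x` has only the `|x| + 1` factorizations `x = take k x ++ drop k x`. If `x` lies in
every `L₂ · Wᵢ`, the sets of admissible cut points `k` form a decreasing sequence of nonempty
subsets of a finite set, so some cut point is admissible for every `i`, and `x ∈ L₂ · ⋂ᵢ Wᵢ`.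
Union with `L₁` commutes with intersections in any coframe.
-/

theorem Set.nonempty_iInter_of_directed_of_finite {α ι : Type*} [Finite α] [Nonempty ι]
    {S : ι → Set α} (hd : Directed (· ⊇ ·) S) (hne : ∀ i, (S i).Nonempty) :
    (⋂ i, S i).Nonempty :=
  letI : TopologicalSpace α := ⊥
  haveI : DiscreteTopology α := ⟨rfl⟩
  IsCompact.nonempty_iInter_of_directed_nonempty_isCompact_isClosed S hd hne
    (fun i ↦ (S i).toFinite.isCompact) (fun _ ↦ isClosed_discrete _)

namespace Language

variable {A : Type*}

theorem mem_mul_iff_exists_fin {L M : Language A} {x : List A} :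
    x ∈ L * M ↔ ∃ k : Fin (x.length + 1), x.take k ∈ L ∧ x.drop k ∈ M := by
  rw [mem_mul]
  constructor
  · rintro ⟨a, ha, b, hb, rfl⟩
    refine ⟨⟨a.length, by simp⟩, ?_, ?_⟩
    · simpa using ha
    · simpa using hb
  · rintro ⟨k, hk, hk'⟩
    exact ⟨_, hk, _, hk', List.take_append_drop _ _⟩

theorem mul_iInf_of_directed {ι : Type*} [Nonempty ι] (L : Language A) {W : ι → Language A}
    (hW : Directed (· ≥ ·) W) : L * ⨅ i, W i = ⨅ i, L * W i := by
  refine le_antisymm (le_iInf fun i ↦ mul_le_mul_right (iInf_le W i) L) fun x hx ↦ ?_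
  have hx : ∀ i, x ∈ L * W i := Set.mem_iInter.mp hx
  let cuts (M : Language A) : Set (Fin (x.length + 1)) := {k | x.take k ∈ L ∧ x.drop k ∈ M}
  have hcuts : Directed (· ⊇ ·) (cuts ∘ W) := hW.mono_comp _ fun _ _ h _ hk ↦ ⟨hk.1, h hk.2⟩
  obtain ⟨k, hk⟩ := Set.nonempty_iInter_of_directed_of_finite hcuts
    fun i ↦ mem_mul_iff_exists_fin.mp (hx i)
  rw [Set.mem_iInter] at hk
  exact mem_mul_iff_exists_fin.mpr
    ⟨k, (hk (Classical.arbitrary ι)).1, Set.mem_iInter.mpr fun i ↦ (hk i).2⟩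

end Language

/-- The map `T(W) = L₁ ∪ (L₂ · W)` on languages is co-continuous: for every
decreasing sequence of languages `W₀ ⊇ W₁ ⊇ …`, `T(⋂ᵢ Wᵢ) = ⋂ᵢ T(Wᵢ)`. -/
theorem T_cocontinuous {A : Type*} (L₁ L₂ : Language A) (W : ℕ → Language A)
    (hanti : ∀ i, W (i + 1) ≤ W i) :
    L₁ + L₂ * (⨅ i, W i) = ⨅ i, (L₁ + L₂ * W i) := by
  rw [Language.mul_iInf_of_directed L₂ (antitone_nat_of_succ_le hanti).directed_ge]
  exact sup_iInf_eq L₁ _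
end

section
/- For a language L with ε ∉ L, the iterates of T(W) = L₁ ∪ (L · W) starting from the full language A* satisfy, for all n ≥ 1, Tⁿ(A*) = (⋃_{k<n} Lᵏ · L₁) ∪ (Lⁿ · A*), and hence ⋂ₙ Tⁿ(A*) = L* · L₁. -/
/-!
Unrolling `T(W) = L₁ + L·W` gives `Tⁿ(W) = (⋃_{k<n} Lᵏ·L₁) ∪ Lⁿ·W` for every `W`. Since `ε ∉ L`,
every word of `Lⁿ·A*` has length at least `n`, so a word `x` lying in all iterates lies in the
first part of `T^(|x|+1)(A*)`, hence in `L*·L₁`. Conversely `Lᵏ·L₁` lies in the first part of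
`Tⁿ(A*)` when `k < n` and in `Lⁿ·A*` when `k ≥ n`.
-/

open Computability

namespace Language

variable {A : Type*} {L : Language A}

theorem length_le_of_mem_pow (h : [] ∉ L) :
    ∀ {n : ℕ} {x : List A}, x ∈ L ^ n → n ≤ x.length
  | 0, _, _ => Nat.zero_le _
  | n + 1, x, hx => by
    rw [pow_succ', mem_mul] at hx
    obtain ⟨a, ha, b, hb, rfl⟩ := hx
    have ha_pos : 0 < a.length := List.length_pos_iff.2 (ne_of_mem_of_not_mem ha h)
    have := length_le_of_mem_pow h hb
    simp only [List.length_append]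
    omega

theorem length_le_of_mem_pow_mul (h : [] ∉ L) {n : ℕ} {M : Language A} {x : List A}
    (hx : x ∈ L ^ n * M) : n ≤ x.length := by
  obtain ⟨a, ha, b, -, rfl⟩ := mem_mul.1 hx
  have := length_le_of_mem_pow h ha
  simp only [List.length_append]
  omega

theorem iterate_add_mul (L₁ W : Language A) (n : ℕ) :
    (fun W => L₁ + L * W)^[n] W = (⨆ k < n, L ^ k * L₁) + L ^ n * W := by
  induction n with
  | zero => simp
  | succ n ih =>
    rw [Function.iterate_succ_apply', ih, Nat.iSup_lt_succ', mul_add, ← mul_assoc, ← pow_succ',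
      ← add_assoc]
    simp only [mul_iSup, ← mul_assoc, ← pow_succ', pow_zero, one_mul]
    rfl

theorem iInf_iSup_pow_mul_add_pow_mul_top (h : [] ∉ L) (L₁ : Language A) :
    ⨅ n : ℕ, ((⨆ k < n, L ^ k * L₁) + L ^ n * ⊤) = L∗ * L₁ := by
  apply le_antisymm
  · intro x hx
    have hx' := iInf_le (fun n : ℕ => (⨆ k < n, L ^ k * L₁) + L ^ n * ⊤) (x.length + 1) hx
    rcases (mem_add _ _ _).1 hx' with hx' | hx'
    · simp only [mem_iSup] at hx'
      obtain ⟨k, -, hk⟩ := hx'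
      exact mul_le_mul_left (le_iSup (L ^ ·) k |>.trans_eq (kstar_eq_iSup_pow L).symm) L₁ hk
    · exact absurd (length_le_of_mem_pow_mul h hx') (by omega)
  · refine le_iInf fun n => ?_
    rw [kstar_eq_iSup_pow, iSup_mul]
    refine iSup_le fun k => ?_
    rcases lt_or_ge k n with hk | hk
    · exact (le_iSup₂ (f := fun j (_ : j < n) => L ^ j * L₁) k hk).trans le_self_add
    · calc L ^ k * L₁ = L ^ n * (L ^ (k - n) * L₁) := by
            rw [← mul_assoc, ← pow_add, Nat.add_sub_cancel' hk]
        _ ≤ L ^ n * ⊤ := mul_le_mul_right le_top _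
        _ ≤ _ := le_add_self

end Language

/-- If `ε ∉ L`, the iterates of `T(W) = L₁ ∪ (L · W)` from the full language
`⊤ = A*` satisfy `Tⁿ(⊤) = (⋃_{k<n} Lᵏ·L₁) ∪ Lⁿ·⊤` for all `n ≥ 1`, and hence
`⋂ₙ Tⁿ(⊤) = L* · L₁`. -/
theorem iterate_top_eq_and_iInf {A : Type*} (L₁ L : Language A) (h : [] ∉ L) :
    (∀ n : ℕ, 1 ≤ n →
        (fun W => L₁ + L * W)^[n] ⊤ = (⨆ k < n, L ^ k * L₁) + L ^ n * ⊤) ∧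
      ⨅ n : ℕ, (fun W => L₁ + L * W)^[n] ⊤ = L∗ * L₁ := by
  refine ⟨fun n _ => Language.iterate_add_mul L₁ ⊤ n, ?_⟩
  simp only [Language.iterate_add_mul]
  exact Language.iInf_iSup_pow_mul_add_pow_mul_top h L₁
end
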